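/- arXiv:math/9808097 — 8 statements merged into one kernel-verified Lean document; each statement's English description precedes it below -/
import Mathlib

section
/- Let V be a finite-dimensional complex vector space, let f be a linear endomorphism of V that is not nilpotent, and let λ ∈ ℂ. If λ • f is similar to f, then |λ| = 1. -/
/-!
Similar endomorphisms have the same spectrum, so `spectrum (λ • f) = λ • spectrum f` is the
finite set `spectrum f`. Over `ℂ` a non-nilpotent `f` has a nonzero eigenvalue `μ`, and the
whole orbit `λⁿ μ` lies in that finite set, which forces `|λ| = 1`.
-/

open Polynomial Pointwise

theorem Module.End.isNilpotent_of_spectrum_subset_zero {K V : Type*} [Field K] [IsAlgClosed K]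
    [AddCommGroup V] [Module K V] [FiniteDimensional K V] {f : Module.End K V}
    (hf : spectrum K f ⊆ {0}) : IsNilpotent f := by
  set p := minpoly K f
  obtain ⟨n, hroots⟩ : ∃ n, p.roots = Multiset.replicate n 0 :=
    ⟨_, Multiset.eq_replicate_card.mpr fun μ hμ => hf <| hasEigenvalue_iff_mem_spectrum.mp <|
      hasEigenvalue_of_isRoot (isRoot_of_mem_roots hμ)⟩
  have hp : p = X ^ n := by
    have hmonic : p.Monic := minpoly.monic (Algebra.IsIntegral.isIntegral f)
    simpa [hroots] using (IsAlgClosed.splits p).eq_prod_roots_of_monic hmonic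
  have hfp : aeval f p = 0 := minpoly.aeval K f
  rw [hp, map_pow, aeval_X] at hfp
  exact ⟨n, hfp⟩

theorem norm_eq_one_of_smul_set_eq_self {𝕜 : Type*} [NormedDivisionRing 𝕜] {S : Set 𝕜}
    (hS : S.Finite) {l : 𝕜} (hl : l • S = S) {μ : 𝕜} (hμ : μ ∈ S) (hμ0 : μ ≠ 0) : ‖l‖ = 1 := by
  have hl0 : l ≠ 0 := by
    rintro rfl
    rw [← hl] at hμ
    obtain ⟨x, -, rfl⟩ := hμ
    exact hμ0 (zero_smul _ x)
  have horbit : ∀ n : ℕ, l ^ n * μ ∈ S := by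
    intro n
    induction n with
    | zero => simpa using hμ
    | succ n ih => rw [pow_succ', mul_assoc, ← hl]; exact Set.smul_mem_smul_set ih
  by_contra hl1
  have hinj : Function.Injective fun n : ℕ => l ^ n * μ := fun m n hmn => by
    have := congrArg norm hmn
    simp only [norm_mul, norm_pow, mul_left_inj' (norm_ne_zero_iff.mpr hμ0)] at this
    exact pow_right_injective₀ (norm_pos_iff.mpr hl0) hl1 this
  exact Set.infinite_of_injective_forall_mem hinj horbit hS

/-- Non-nilpotent case of Lemma 5.1: if `f` is a non-nilpotent endomorphism of a
finite-dimensional complex vector space and `λ • f` is similar to `f`, then `|λ| = 1`. -/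
theorem stmt_2 {V : Type*} [AddCommGroup V] [Module ℂ V] [FiniteDimensional ℂ V]
    (f : V →ₗ[ℂ] V) (hf : ¬ IsNilpotent f) (l : ℂ)
    (h : ∃ u : V ≃ₗ[ℂ] V, l • f = u.toLinearMap ∘ₗ f ∘ₗ u.symm.toLinearMap) :
    ‖l‖ = 1 := by
  obtain ⟨u, hu⟩ := h
  obtain ⟨μ, hμ, hμ0⟩ : ∃ μ ∈ spectrum ℂ f, μ ≠ 0 := by
    by_contra! hzero
    exact hf (Module.End.isNilpotent_of_spectrum_subset_zero hzero)
  have : Nontrivial (Module.End ℂ V) := (subsingleton_or_nontrivial _).resolve_left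
    fun _ => by simp [spectrum.of_subsingleton] at hμ
  have hscale : l • spectrum ℂ f = spectrum ℂ f := by
    rw [← spectrum.smul_eq_smul l f ⟨μ, hμ⟩, hu, ← u.conjAlgEquiv_apply (R := ℂ),
      AlgEquiv.spectrum_eq]
  exact norm_eq_one_of_smul_set_eq_self (Module.End.finite_spectrum f) hscale hμ hμ0
end

section
/- Let V be a finite-dimensional complex vector space and let f be a linear endomorphism of V that is not nilpotent. Then the set {λ ∈ ℂ : λ • f is similar to f} is finite. -/
/-!
If `λ • f` is conjugate to `f` then `λ • σ(f) = σ(f)`, so `λ μ ∈ σ(f)` for a fixed nonzero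
eigenvalue `μ`; since `σ(f)` is finite and `λ ↦ λ μ` is injective, only finitely many `λ` occur.
A nonzero eigenvalue exists because otherwise, over an algebraically closed field, `V` is the
generalized eigenspace of `0`, i.e. `f` is nilpotent.
-/

namespace Module.End

theorem exists_hasEigenvalue_ne_zero_of_not_isNilpotent {K V : Type*} [Field K] [IsAlgClosed K]
    [AddCommGroup V] [Module K V] [FiniteDimensional K V] {f : End K V}
    (hf : ¬IsNilpotent f) : ∃ μ ≠ 0, f.HasEigenvalue μ := by
  contrapose! hf
  have hbot : ∀ μ ≠ 0, f.maxGenEigenspace μ = ⊥ := fun μ hμ ↦ by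
    by_contra h
    exact hf μ hμ (HasUnifEigenvalue.lt zero_lt_one h)
  have htop : f.maxGenEigenspace 0 = ⊤ := by
    rw [eq_top_iff, ← f.iSup_maxGenEigenspace_eq_top]
    refine iSup_le fun μ ↦ ?_
    rcases eq_or_ne μ 0 with rfl | hμ
    · exact le_rfl
    · simp [hbot μ hμ]
  refine ((LinearMap.charpoly_nilpotent_tfae f).out 0 2).mpr fun m ↦ ?_
  simpa using (f.mem_maxGenEigenspace 0 m).mp (htop ▸ Submodule.mem_top)

end Module.End

theorem spectrum.finite_setOf_spectrum_smul_eq {K A : Type*} [Field K] [Ring A] [Algebra K A]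
    {a : A} (hfin : (spectrum K a).Finite) {μ : K} (hμ : μ ∈ spectrum K a) (hμ0 : μ ≠ 0) :
    {l : K | spectrum K (l • a) = spectrum K a}.Finite := by
  have : Nontrivial A := not_subsingleton_iff_nontrivial.mp fun _ ↦ by simp at hμ
  refine (hfin.preimage (mul_left_injective₀ hμ0).injOn).subset fun l hl ↦ ?_
  rw [Set.mem_preimage, ← smul_eq_mul, ← Set.mem_ofPred_eq.mp hl,
    spectrum.smul_eq_smul l a ⟨μ, hμ⟩]
  exact Set.smul_mem_smul_set hμ

/-- Finiteness assertion in Lemma 5.1: a non-nilpotent endomorphism of a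
finite-dimensional complex vector space admits only finitely many scaling factors `λ`
such that `λ • f` is similar to `f`. -/
theorem stmt_3 {V : Type*} [AddCommGroup V] [Module ℂ V] [FiniteDimensional ℂ V]
    (f : V →ₗ[ℂ] V) (hf : ¬ IsNilpotent f) :
    {l : ℂ | ∃ u : V ≃ₗ[ℂ] V, l • f = u.toLinearMap ∘ₗ f ∘ₗ u.symm.toLinearMap}.Finite := by
  obtain ⟨μ, hμ0, hμ⟩ := Module.End.exists_hasEigenvalue_ne_zero_of_not_isNilpotent hf
  refine (spectrum.finite_setOf_spectrum_smul_eq (Module.End.finite_spectrum f)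
    hμ.mem_spectrum hμ0).subset ?_
  rintro l ⟨u, hu⟩
  rw [Set.mem_ofPred_eq, hu, ← LinearEquiv.conjAlgEquiv_apply (R := ℂ), AlgEquiv.spectrum_eq]
end

section
/- Let L be a finite-dimensional complex Lie algebra and let X ∈ L be such that ad X is not nilpotent. Then the set {λ ∈ ℂ : there exists a Lie algebra automorphism φ of L with φ X = λ • X} is finite, and every element λ of this set satisfies |λ| = 1. -/
/-!
An automorphism `φ` with `φ X = λ • X` conjugates `ad X` to `λ • ad X`, so multiplication by `λ`
permutes the finite spectrum of `ad X`. Since `ad X` is not nilpotent this spectrum contains some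
`μ ≠ 0`, and `λ ↦ λ μ` embeds the stabilizer of the spectrum in `ℂˣ` into the spectrum itself.
Hence the stabilizer is a finite group: it has finitely many elements, each a root of unity.
-/

open Pointwise

open Polynomial in
theorem Module.End.exists_mem_spectrum_ne_zero_of_not_isNilpotent {K V : Type*} [Field K]
    [IsAlgClosed K] [AddCommGroup V] [Module K V] [FiniteDimensional K V] {f : Module.End K V}
    (hf : ¬ IsNilpotent f) : ∃ μ ∈ spectrum K f, μ ≠ 0 := by
  contrapose! hf
  set n := Multiset.card f.charpoly.roots
  have hroots : f.charpoly.roots = Multiset.replicate n 0 :=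
    Multiset.eq_replicate.mpr ⟨rfl, fun μ hμ =>
      hf μ ((f.mem_spectrum_iff_isRoot_charpoly μ).mpr (isRoot_of_mem_roots hμ))⟩
  have hcharpoly : f.charpoly = X ^ n := by
    rw [(IsAlgClosed.splits _).eq_prod_roots_of_monic f.charpoly_monic, hroots]
    simp
  exact ⟨n, by simpa [hcharpoly] using f.aeval_self_charpoly⟩

theorem LieEquiv.spectrum_ad_apply {R L : Type*} [CommRing R] [LieRing L] [LieAlgebra R L]
    (e : L ≃ₗ⁅R⁆ L) (x : L) :
    spectrum R (LieAlgebra.ad R L (e x)) = spectrum R (LieAlgebra.ad R L x) := by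
  rw [← LieAlgebra.conj_ad_apply]
  exact AlgEquiv.spectrum_eq (e.toLinearEquiv.conjAlgEquiv R) _

theorem LieEquiv.mem_stabilizer_spectrum_ad_of_apply_eq_smul {R L : Type*} [CommRing R]
    [LieRing L] [LieAlgebra R L] (e : L ≃ₗ⁅R⁆ L) {x : L} {u : Rˣ} (h : e x = (u : R) • x) :
    u ∈ MulAction.stabilizer Rˣ (spectrum R (LieAlgebra.ad R L x)) := by
  rw [MulAction.mem_stabilizer_iff, ← spectrum.unit_smul_eq_smul, ← e.spectrum_ad_apply, h,
    map_smul, Units.smul_def]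

theorem Set.Finite.finite_stabilizer {G α : Type*} [Group G] [MulAction G α] {s : Set α}
    (hs : s.Finite) {a : α} (ha : a ∈ s) (hfree : Function.Injective (· • a : G → α)) :
    (MulAction.stabilizer G s : Set G).Finite :=
  (hs.preimage hfree.injOn).subset fun g hg => by
    rw [SetLike.mem_coe, MulAction.mem_stabilizer_iff] at hg
    exact hg ▸ Set.smul_mem_smul_set ha

theorem Units.smul_left_injective {K : Type*} [Field K] {μ : K} (hμ : μ ≠ 0) :
    Function.Injective (· • μ : Kˣ → K) :=
  fun _ _ h => Units.ext (mul_right_cancel₀ hμ h)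

theorem Complex.norm_units_eq_one_of_isOfFinOrder {u : ℂˣ} (hu : IsOfFinOrder u) :
    ‖(u : ℂ)‖ = 1 := by
  obtain ⟨n, hn, hun⟩ := hu.exists_pow_eq_one
  exact Complex.norm_eq_one_of_pow_eq_one (by rw [← Units.val_pow_eq_pow_val, hun, Units.val_one])
    hn.ne'

/-- Lie-algebra form of the non-nilpotent case of Lemma 5.1: if `ad X` is not nilpotent,
then the set of `λ ∈ ℂ` for which some Lie algebra automorphism maps `X` to `λ • X`
is finite and consists of complex numbers of modulus one. -/
theorem stmt_5 {L : Type*} [LieRing L] [LieAlgebra ℂ L] [FiniteDimensional ℂ L]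
    (X : L) (hX : ¬ IsNilpotent (LieAlgebra.ad ℂ L X)) :
    {l : ℂ | ∃ φ : L ≃ₗ⁅ℂ⁆ L, φ X = l • X}.Finite ∧
      ∀ l ∈ {l : ℂ | ∃ φ : L ≃ₗ⁅ℂ⁆ L, φ X = l • X}, ‖l‖ = 1 := by
  set G := MulAction.stabilizer ℂˣ (spectrum ℂ (LieAlgebra.ad ℂ L X))
  obtain ⟨μ, hμ, hμ0⟩ := Module.End.exists_mem_spectrum_ne_zero_of_not_isNilpotent hX
  have hG : (G : Set ℂˣ).Finite :=
    (Module.End.finite_spectrum _).finite_stabilizer hμ (Units.smul_left_injective hμ0)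
  have hX0 : X ≠ 0 := by
    rintro rfl
    exact hX (by simp)
  have hS : {l : ℂ | ∃ φ : L ≃ₗ⁅ℂ⁆ L, φ X = l • X} ⊆ Units.val '' G := by
    rintro l ⟨φ, hφ⟩
    have hl : l ≠ 0 := by
      rintro rfl
      exact hX0 (φ.injective (a₂ := 0) (by simpa using hφ))
    exact ⟨Units.mk0 l hl, φ.mem_stabilizer_spectrum_ad_of_apply_eq_smul hφ, rfl⟩
  refine ⟨(hG.image _).subset hS, fun l hl => ?_⟩
  obtain ⟨u, hu, rfl⟩ := hS hl
  have := hG.to_subtype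
  exact Complex.norm_units_eq_one_of_isOfFinOrder
    (Submonoid.isOfFinOrder_coe.mpr (isOfFinOrder_of_finite (⟨u, hu⟩ : G)))
end

section
/- Let L be a finite-dimensional complex Lie algebra and let (h, e, f) be an sl₂-triple in L. Then for every nonzero c ∈ ℂ there exists a Lie algebra automorphism φ of L with φ e = c • e. -/
/-!
Write `L` as the direct sum of the generalized eigenspaces `L_μ` of `ad h`. Since `ad h` is a
derivation, `⁅L_μ, L_ν⁆ ⊆ L_{μ+ν}`, so for any additive character `ψ : ℂ → ℂˣ` the map acting
on `L_μ` as multiplication by `ψ μ` is a Lie algebra automorphism: this is `exp (t • ad h)` for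
`ψ μ = exp (t μ)`. As `e ∈ L_2`, taking `t = log c / 2` sends `e` to `c • e`.
-/

namespace Module.End

variable {K M : Type*} [Field K] [DecidableEq K] [AddCommGroup M] [Module K M]

theorem isInternal_maxGenEigenspace (D : End K M) (hD : ⨆ μ, D.maxGenEigenspace μ = ⊤) :
    DirectSum.IsInternal fun μ ↦ D.maxGenEigenspace μ :=
  DirectSum.isInternal_submodule_of_iSupIndep_of_iSup_eq_top D.independent_maxGenEigenspace hD

noncomputable def maxGenEigenspaceScaling (D : End K M) (hD : ⨆ μ, D.maxGenEigenspace μ = ⊤)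
    (g : K → Kˣ) : M ≃ₗ[K] M :=
  let E := LinearEquiv.ofBijective (DirectSum.coeLinearMap fun μ ↦ D.maxGenEigenspace μ)
    (D.isInternal_maxGenEigenspace hD)
  E.symm ≪≫ₗ DFinsupp.mapRange.linearEquiv (fun μ ↦ LinearEquiv.smulOfUnit (g μ)) ≪≫ₗ E

theorem maxGenEigenspaceScaling_apply_of_mem (D : End K M) (hD : ⨆ μ, D.maxGenEigenspace μ = ⊤)
    (g : K → Kˣ) {μ : K} {x : M} (hx : x ∈ D.maxGenEigenspace μ) :
    D.maxGenEigenspaceScaling hD g x = g μ • x := by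
  let E := LinearEquiv.ofBijective (DirectSum.coeLinearMap fun μ ↦ D.maxGenEigenspace μ)
    (D.isInternal_maxGenEigenspace hD)
  have hE (y : D.maxGenEigenspace μ) :
      E (DirectSum.lof K K (fun μ ↦ D.maxGenEigenspace μ) μ y) = y :=
    DirectSum.coeLinearMap_of _ μ y
  have hsymm := E.symm_apply_eq.mpr (hE ⟨x, hx⟩).symm
  simp only [maxGenEigenspaceScaling, LinearEquiv.trans_apply]
  erw [hsymm]
  rw [DirectSum.lof_eq_of, DFinsupp.mapRange.linearEquiv_apply, DirectSum.of,
    DFinsupp.singleAddHom_apply, DFinsupp.mapRange_single]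
  exact hE (g μ • ⟨x, hx⟩)

end Module.End

namespace LieAlgebra

variable {K L : Type*} [Field K] [DecidableEq K] [LieRing L] [LieAlgebra K L]

theorem map_lie_maxGenEigenspaceScaling_ad (h : L)
    (hh : ⨆ μ, (LieModule.toEnd K L L h).maxGenEigenspace μ = ⊤) (ψ : AddChar K Kˣ) (x y : L) :
    (LieModule.toEnd K L L h).maxGenEigenspaceScaling hh ψ ⁅x, y⁆ =
      ⁅(LieModule.toEnd K L L h).maxGenEigenspaceScaling hh ψ x,
        (LieModule.toEnd K L L h).maxGenEigenspaceScaling hh ψ y⁆ := by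
  have hmem (z : L) : z ∈ ⨆ μ, (LieModule.toEnd K L L h).maxGenEigenspace μ := hh ▸ trivial
  induction hmem x using Submodule.iSup_induction' with
  | mem μ x hx =>
    induction hmem y using Submodule.iSup_induction' with
    | mem ν y hy =>
      rw [Module.End.maxGenEigenspaceScaling_apply_of_mem _ _ _
          (LieModule.lie_mem_maxGenEigenspace_toEnd hx hy),
        Module.End.maxGenEigenspaceScaling_apply_of_mem _ _ _ hx,
        Module.End.maxGenEigenspaceScaling_apply_of_mem _ _ _ hy, AddChar.map_add_eq_mul,
        mul_smul]
      simp only [Units.smul_def, smul_lie, lie_smul, smul_comm (ψ μ : K)]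
    | zero => simp
    | add y₁ y₂ _ _ ih₁ ih₂ => rw [lie_add, map_add, ih₁, ih₂, map_add, lie_add]
  | zero => simp
  | add x₁ x₂ _ _ ih₁ ih₂ => rw [add_lie, map_add, ih₁, ih₂, map_add, add_lie]

noncomputable def adScaling (h : L)
    (hh : ⨆ μ, (LieModule.toEnd K L L h).maxGenEigenspace μ = ⊤) (ψ : AddChar K Kˣ) :
    L ≃ₗ⁅K⁆ L :=
  { (LieModule.toEnd K L L h).maxGenEigenspaceScaling hh ψ with
    map_lie' := map_lie_maxGenEigenspaceScaling_ad h hh ψ _ _ }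

theorem adScaling_apply_of_lie_eq_smul (h : L)
    (hh : ⨆ μ, (LieModule.toEnd K L L h).maxGenEigenspace μ = ⊤) (ψ : AddChar K Kˣ) {μ : K}
    {x : L} (hx : ⁅h, x⁆ = μ • x) : adScaling h hh ψ x = ψ μ • x :=
  Module.End.maxGenEigenspaceScaling_apply_of_mem _ hh ψ <|
    Module.End.eigenspace_le_maxGenEigenspace (Module.End.mem_eigenspace_iff.mpr hx)

end LieAlgebra

noncomputable def Complex.expMulAddChar (t : ℂ) : AddChar ℂ ℂˣ where
  toFun μ := Units.mk0 (Complex.exp (t * μ)) (Complex.exp_ne_zero _)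
  map_zero_eq_one' := by ext; simp
  map_add_eq_mul' μ ν := by ext; simp [mul_add, Complex.exp_add]

theorem stmt_7_general {L : Type*} [LieRing L] [LieAlgebra ℂ L] [FiniteDimensional ℂ L]
    (h e : L) (hhe : ⁅h, e⁆ = (2 : ℂ) • e) (c : ℂ) (hc : c ≠ 0) :
    ∃ φ : L ≃ₗ⁅ℂ⁆ L, φ e = c • e := by
  refine ⟨LieAlgebra.adScaling h (Module.End.iSup_maxGenEigenspace_eq_top _)
    (Complex.expMulAddChar (Complex.log c / 2)), ?_⟩
  rw [LieAlgebra.adScaling_apply_of_lie_eq_smul _ _ _ hhe]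
  simp [Complex.expMulAddChar, Units.smul_def, Complex.exp_log hc]

/-- Nilpotent case of Lemma 5.1: if `(h, e, f)` is an `sl₂`-triple in a finite-dimensional
complex Lie algebra, then for every nonzero `c ∈ ℂ` there is a Lie algebra automorphism
mapping `e` to `c • e`. -/
theorem stmt_7 {L : Type*} [LieRing L] [LieAlgebra ℂ L] [FiniteDimensional ℂ L]
    (h e f : L) (hhe : ⁅h, e⁆ = (2 : ℂ) • e) (hhf : ⁅h, f⁆ = (-2 : ℂ) • f)
    (hef : ⁅e, f⁆ = h) (c : ℂ) (hc : c ≠ 0) :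
    ∃ φ : L ≃ₗ⁅ℂ⁆ L, φ e = c • e :=
  stmt_7_general h e hhe c hc
end

section
/- Let L be a finite-dimensional complex Lie algebra, let (h, e, f) be an sl₂-triple in L, and let s ∈ L satisfy ⁅h, s⁆ = 0. Then for every nonzero c ∈ ℂ there exists a Lie algebra automorphism φ of L with φ s = s and φ e = c • e. -/
open scoped DirectSum

section aux

/-- An additive-to-multiplicative character of `ℂ` taking the value `c` at `2`. -/
lemma exists_scal (c : ℂ) (hc : c ≠ 0) :
    ∃ g : ℂ → ℂ, (∀ μ, g μ ≠ 0) ∧ g 0 = 1 ∧ g 2 = c ∧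
      ∀ μ ν, g (μ + ν) = g μ * g ν := by
  have h2 : (2 : ℂ) ≠ 0 := two_ne_zero
  obtain ⟨q, hq⟩ := Submodule.exists_isCompl (ℚ ∙ (2 : ℂ))
  let π : ℂ →ₗ[ℚ] (ℚ ∙ (2 : ℂ)) := Submodule.linearProjOfIsCompl _ q hq
  let j : (ℚ ∙ (2 : ℂ)) →ₗ[ℚ] ℂ :=
    (LinearMap.toSpanSingleton ℚ ℂ (Complex.log c)).comp
      ((LinearEquiv.toSpanNonzeroSingleton ℚ ℂ 2 h2).symm : (ℚ ∙ (2 : ℂ)) →ₗ[ℚ] ℚ)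
  let ℓ : ℂ →ₗ[ℚ] ℂ := j.comp π
  refine ⟨fun μ => Complex.exp (ℓ μ), fun μ => Complex.exp_ne_zero _, ?_, ?_, ?_⟩
  · simp [ℓ]
  · have hπ : π 2 = ⟨2, Submodule.mem_span_singleton_self _⟩ :=
      Submodule.linearProjOfIsCompl_apply_left hq ⟨2, Submodule.mem_span_singleton_self _⟩
    have hsym : (LinearEquiv.toSpanNonzeroSingleton ℚ ℂ 2 h2).symm
        ⟨2, Submodule.mem_span_singleton_self _⟩ = 1 := by
      rw [LinearEquiv.symm_apply_eq, LinearEquiv.toSpanNonzeroSingleton_one]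
    have hl : ℓ 2 = Complex.log c := by
      simp [ℓ, j, hπ, hsym, LinearMap.toSpanSingleton_apply]
    show Complex.exp (ℓ 2) = c
    rw [hl, Complex.exp_log hc]
  · intro μ ν
    show Complex.exp (ℓ (μ + ν)) = Complex.exp (ℓ μ) * Complex.exp (ℓ ν)
    rw [map_add, Complex.exp_add]

end aux

/-- Scaling the nilpotent part while fixing a commuting element (Section 6.3): if
`(h, e, f)` is an `sl₂`-triple in a finite-dimensional complex Lie algebra and
`⁅h, s⁆ = 0`, then for every nonzero `c ∈ ℂ` there is a Lie algebra automorphism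
fixing `s` and mapping `e` to `c • e`. -/
theorem stmt_8 {L : Type*} [LieRing L] [LieAlgebra ℂ L] [FiniteDimensional ℂ L]
    (h e f : L) (hhe : ⁅h, e⁆ = (2 : ℂ) • e) (hhf : ⁅h, f⁆ = (-2 : ℂ) • f)
    (hef : ⁅e, f⁆ = h) (s : L) (hs : ⁅h, s⁆ = 0) (c : ℂ) (hc : c ≠ 0) :
    ∃ φ : L ≃ₗ⁅ℂ⁆ L, φ s = s ∧ φ e = c • e := by
  classical
  obtain ⟨g, hg0, hgzero, hg2, hgadd⟩ := exists_scal c hc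
  set A : Module.End ℂ L := LieModule.toEnd ℂ L L h with hA
  set N : ℂ → Submodule ℂ L := A.maxGenEigenspace with hN
  have hI : DirectSum.IsInternal N :=
    DirectSum.isInternal_submodule_of_iSupIndep_of_iSup_eq_top
      A.independent_maxGenEigenspace A.iSup_maxGenEigenspace_eq_top
  let eqv : (⨁ μ : ℂ, N μ) ≃ₗ[ℂ] L := LinearEquiv.ofBijective (DirectSum.coeLinearMap N) hI
  let E : ∀ μ : ℂ, N μ ≃ₗ[ℂ] N μ := fun μ => LinearEquiv.smulOfNeZero ℂ (N μ) (g μ) (hg0 μ)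
  let Φ : L ≃ₗ[ℂ] L := eqv.symm ≪≫ₗ DFinsupp.mapRange.linearEquiv E ≪≫ₗ eqv
  -- key: on the generalized eigenspace for `μ`, `Φ` is multiplication by `g μ`.
  have key : ∀ (μ : ℂ) (x : L), x ∈ N μ → Φ x = g μ • x := by
    intro μ x hx
    have h1 : eqv.symm x = DirectSum.of (fun μ : ℂ => N μ) μ ⟨x, hx⟩ := by
      rw [LinearEquiv.symm_apply_eq]
      exact (DirectSum.coeLinearMap_of N μ ⟨x, hx⟩).symm
    have h2 : DFinsupp.mapRange.linearEquiv E (DirectSum.of (fun μ : ℂ => N μ) μ ⟨x, hx⟩)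
        = DirectSum.of (fun μ : ℂ => N μ) μ (E μ ⟨x, hx⟩) := by
      exact DFinsupp.mapRange_single (hf := fun i => (E i).map_zero)
    show eqv (DFinsupp.mapRange.linearEquiv E (eqv.symm x)) = g μ • x
    rw [h1, h2]
    have : eqv (DirectSum.of (fun μ : ℂ => N μ) μ (E μ ⟨x, hx⟩)) = (E μ ⟨x, hx⟩ : L) :=
      DirectSum.coeLinearMap_of N μ _
    rw [this]
    rfl
  have htop : ∀ x : L, x ∈ ⨆ μ : ℂ, N μ := by
    rw [A.iSup_maxGenEigenspace_eq_top]; exact fun x => trivial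
  -- bracket compatibility
  have hbr : ∀ x y : L, Φ ⁅x, y⁆ = ⁅Φ x, Φ y⁆ := by
    intro x y
    induction (htop x) using Submodule.iSup_induction' with
    | mem μ x hx =>
      induction (htop y) using Submodule.iSup_induction' with
      | mem ν y hy =>
        have hxy : ⁅x, y⁆ ∈ N (μ + ν) :=
          LieModule.lie_mem_maxGenEigenspace_toEnd hx hy
        rw [key _ _ hxy, key _ _ hx, key _ _ hy, hgadd, smul_lie, lie_smul,
          smul_smul]
      | zero => simp
      | add y₁ y₂ _ _ ih₁ ih₂ => rw [lie_add, map_add, ih₁, ih₂, map_add, lie_add]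
    | zero => simp
    | add x₁ x₂ _ _ ih₁ ih₂ => rw [add_lie, map_add, ih₁, ih₂, map_add, add_lie]
  refine ⟨{ Φ with map_lie' := by intro x y; exact hbr x y }, ?_, ?_⟩
  · show Φ s = s
    have hs0 : s ∈ N 0 := by
      rw [hN, Module.End.mem_maxGenEigenspace]
      exact ⟨1, by simpa [hA, LieModule.toEnd_apply_apply] using hs⟩
    rw [key 0 s hs0, hgzero, one_smul]
  · show Φ e = c • e
    have he2 : e ∈ N 2 := by
      rw [hN, Module.End.mem_maxGenEigenspace]
      refine ⟨1, ?_⟩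
      simp [hA, LieModule.toEnd_apply_apply, hhe]
    rw [key 2 e he2, hg2]
end

section
/- Let L be a finite-dimensional complex Lie algebra, carrying its canonical topology as a finite-dimensional complex vector space, let (h, e, f) be an sl₂-triple in L, and let s ∈ L satisfy ⁅h, s⁆ = 0. Then s lies in the closure of the set {φ (s + e) : φ is a Lie algebra automorphism of L}. -/
/-!
For `c ≠ 0`, exponentiating the derivation `(log c / 2) • ad h` gives an automorphism fixing `s`
(as `⁅h, s⁆ = 0`) and scaling the eigenvector `e` of `ad h` by `exp (log c) = c`; letting `c → 0`,
the points `s + c • e` of the orbit tend to `s`. The exponential of a derivation `D` is an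
automorphism because `t ↦ exp (t • D) ⁅x, y⁆` and `t ↦ ⁅exp (t • D) x, exp (t • D) y⁆` solve the
same linear ODE `y' = D y`.
-/

open NormedSpace Topology

section LinearODE

variable {𝕂 E : Type*} [RCLike 𝕂] [NormedAddCommGroup E] [NormedSpace 𝕂 E] [CompleteSpace E]

theorem ContinuousLinearMap.exp_apply_eq_of_hasDerivAt {A : E →L[𝕂] E} {f : 𝕂 → E}
    (hf : ∀ t, HasDerivAt f (A (f t)) t) : exp A (f 0) = f 1 := by
  set g : 𝕂 → E := fun t => exp ((1 - t) • A) (f t)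
  have hg : ∀ t, HasDerivAt g 0 t := by
    intro t
    have hexp : HasDerivAt (fun t : 𝕂 => exp ((1 - t) • A)) (-(exp ((1 - t) • A) * A)) t := by
      simpa [Function.comp_def] using (hasDerivAt_exp_smul_const A (1 - t)).scomp t
        ((hasDerivAt_const t 1).sub (hasDerivAt_id t))
    simpa using hexp.clm_apply (hf t)
  have hconst := is_const_of_deriv_eq_zero (fun t => (hg t).differentiableAt)
    (fun t => (hg t).deriv) 0 1
  simpa [g] using hconst

theorem ContinuousLinearMap.exp_apply_of_eq_smul {A : E →L[𝕂] E} {μ : 𝕂} {x : E}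
    (hx : A x = μ • x) : exp A x = exp μ • x := by
  have hf : ∀ t : 𝕂, HasDerivAt (fun t => exp (t • μ) • x) (A (exp (t • μ) • x)) t := by
    intro t
    simpa [map_smul, hx, smul_smul] using
      (hasDerivAt_exp_smul_const μ t).smul_const x
  simpa using exp_apply_eq_of_hasDerivAt hf

theorem ContinuousLinearMap.exp_apply_bilinear_of_leibniz {A : E →L[𝕂] E}
    {B : E →L[𝕂] E →L[𝕂] E} (hA : ∀ x y, A (B x y) = B (A x) y + B x (A y)) (x y : E) :
    exp A (B x y) = B (exp A x) (exp A y) := by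
  have hexp : ∀ (z : E) (t : 𝕂), HasDerivAt (fun t => exp (t • A) z) (A (exp (t • A) z)) t := by
    intro z t
    simpa using (hasDerivAt_exp_smul_const' A t).clm_apply (hasDerivAt_const t z)
  have hf : ∀ t : 𝕂, HasDerivAt (fun t => B (exp (t • A) x) (exp (t • A) y))
      (A (B (exp (t • A) x) (exp (t • A) y))) t := by
    intro t
    rw [hA, add_comm]
    exact B.hasDerivAt_of_bilinear (fun _ => hexp x t) (fun _ => hexp y t)
  simpa using exp_apply_eq_of_hasDerivAt hf

end LinearODE

theorem LieDerivation.exists_lieEquiv_apply_eq_exp_smul {𝕂 L : Type*} [RCLike 𝕂] [LieRing L]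
    [LieAlgebra 𝕂 L] [FiniteDimensional 𝕂 L] (D : LieDerivation 𝕂 L L) :
    ∃ φ : L ≃ₗ⁅𝕂⁆ L, ∀ (μ : 𝕂) (x : L), D x = μ • x → φ x = NormedSpace.exp μ • x := by
  let b := Module.finBasis 𝕂 L
  let : NormedAddCommGroup L := NormedAddCommGroup.induced L (Fin (Module.finrank 𝕂 L) → 𝕂)
    b.equivFun.toLinearMap b.equivFun.injective
  let : NormedSpace 𝕂 L := NormedSpace.induced 𝕂 L _ b.equivFun.toLinearMap
  have : CompleteSpace L := FiniteDimensional.complete 𝕂 L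
  let A : L →L[𝕂] L := LinearMap.toContinuousLinearMap (D : L →ₗ[𝕂] L)
  let B : L →L[𝕂] L →L[𝕂] L := LinearMap.toContinuousLinearMap
    (LinearMap.toContinuousLinearMap.toLinearMap ∘ₗ
      LinearMap.mk₂ 𝕂 (fun x y : L => ⁅x, y⁆) add_lie smul_lie lie_add lie_smul)
  have hbij : Function.Bijective (NormedSpace.exp A : L →L[𝕂] L) :=
    ContinuousLinearMap.isUnit_iff_bijective.mp
      (isUnit_exp_of_mem_ball (𝕂 := 𝕂)
        ((expSeries_radius_eq_top 𝕂 (L →L[𝕂] L)).symm ▸ edist_lt_top _ _))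
  let φ : L →ₗ⁅𝕂⁆ L :=
    { (NormedSpace.exp A : L →L[𝕂] L) with
      map_lie' := fun {x y} => A.exp_apply_bilinear_of_leibniz (B := B)
        (fun x y => (D.apply_lie_eq_add x y).trans (add_comm _ _)) x y }
  exact ⟨LieEquiv.ofBijective φ hbij, fun μ x hx => A.exp_apply_of_eq_smul hx⟩

theorem stmt_9_general {L : Type*} [LieRing L] [LieAlgebra ℂ L] [FiniteDimensional ℂ L]
    [TopologicalSpace L] [IsTopologicalAddGroup L] [ContinuousSMul ℂ L]
    (h e : L) (hhe : ⁅h, e⁆ = (2 : ℂ) • e) (s : L) (hs : ⁅h, s⁆ = 0) :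
    s ∈ closure {y : L | ∃ φ : L ≃ₗ⁅ℂ⁆ L, φ (s + e) = y} := by
  have hscale : ∀ c : ℂ, c ≠ 0 → ∃ φ : L ≃ₗ⁅ℂ⁆ L, φ (s + e) = s + c • e := by
    intro c hc
    obtain ⟨φ, hφ⟩ :=
      ((Complex.log c / 2) • LieDerivation.ad ℂ L h).exists_lieEquiv_apply_eq_exp_smul
    have hφs : φ s = s := by simpa using hφ 0 s (by simp [hs])
    have hφe : φ e = c • e := by
      rw [hφ (Complex.log c) e (by simp [hhe, smul_smul]), ← Complex.exp_eq_exp_ℂ,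
        Complex.exp_log hc]
    exact ⟨φ, by rw [map_add, hφs, hφe]⟩
  have hlim : Filter.Tendsto (fun c : ℂ => s + c • e) (𝓝[≠] 0) (𝓝 s) :=
    ((continuous_const.add (continuous_id.smul continuous_const)).tendsto' 0 s
      (by simp)).mono_left nhdsWithin_le_nhds
  exact mem_closure_of_tendsto hlim (eventually_nhdsWithin_of_forall hscale)

/-- Part (b) of the lemma on mixed orbits (Section 6.3): if `(h, e, f)` is an
`sl₂`-triple in a finite-dimensional complex Lie algebra (with its canonical topology,
i.e. any Hausdorff vector topology) and `⁅h, s⁆ = 0`, then `s` lies in the closure of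
the orbit of `s + e` under Lie algebra automorphisms. -/
theorem stmt_9 {L : Type*} [LieRing L] [LieAlgebra ℂ L] [FiniteDimensional ℂ L]
    [TopologicalSpace L] [IsTopologicalAddGroup L] [ContinuousSMul ℂ L] [T2Space L]
    (h e f : L) (hhe : ⁅h, e⁆ = (2 : ℂ) • e) (hhf : ⁅h, f⁆ = (-2 : ℂ) • f)
    (hef : ⁅e, f⁆ = h) (s : L) (hs : ⁅h, s⁆ = 0) :
    s ∈ closure {y : L | ∃ φ : L ≃ₗ⁅ℂ⁆ L, φ (s + e) = y} :=
  stmt_9_general h e hhe s hs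
end

section
/- Let L be a finite-dimensional complex Lie algebra, carrying its canonical topology as a finite-dimensional complex vector space, and let X, Y ∈ L. If X lies in the closure of the set {φ Y : φ is a Lie algebra automorphism of L}, then the characteristic polynomial of the endomorphism ad X equals the characteristic polynomial of ad Y. -/
/-!
The characteristic polynomial of `ad` is invariant under automorphisms, since `ad (φ y)` is the
conjugate of `ad y` by `φ`. Its coefficients are polynomial functions of the coordinates, hence
continuous, so the set where `(ad x).charpoly` equals `(ad Y).charpoly` is closed; it contains
the orbit of `Y`, hence its closure.
-/

open Polynomial

theorem LieAlgebra.charpoly_ad_lieEquiv {R L L' : Type*} [CommRing R] [LieRing L] [LieAlgebra R L]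
    [LieRing L'] [LieAlgebra R L'] [Module.Free R L] [Module.Finite R L] [Module.Free R L']
    [Module.Finite R L'] (e : L ≃ₗ⁅R⁆ L') (x : L) :
    (ad R L' (e x)).charpoly = (ad R L x).charpoly := by
  rw [← conj_ad_apply, LinearEquiv.charpoly_conj]

section Continuity

variable {K M N : Type*} [NontriviallyNormedField K] [CompleteSpace K]
  [AddCommGroup M] [Module K M] [TopologicalSpace M] [IsTopologicalAddGroup M]
  [ContinuousSMul K M] [T2Space M] [FiniteDimensional K M]
  [AddCommGroup N] [Module K N] [FiniteDimensional K N]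

theorem LinearMap.continuous_charpoly_coeff (φ : M →ₗ[K] Module.End K N) (i : ℕ) :
    Continuous fun x ↦ (φ x).charpoly.coeff i := by
  let b := Module.finBasis K M
  have hcoord : Continuous fun x : M ↦ ⇑(b.repr x) := b.equivFunL.continuous
  simpa only [Function.comp_def, polyCharpoly_coeff_eval] using
    (MvPolynomial.continuous_eval ((φ.polyCharpoly b).coeff i)).comp hcoord

theorem LinearMap.isClosed_setOf_charpoly_eq (φ : M →ₗ[K] Module.End K N) (p : K[X]) :
    IsClosed {x | (φ x).charpoly = p} := by
  have hcoeff : {x | (φ x).charpoly = p} = ⋂ i, {x | (φ x).charpoly.coeff i = p.coeff i} := by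
    ext x
    simp only [Set.mem_ofPred_eq, Set.mem_iInter, Polynomial.ext_iff]
  rw [hcoeff]
  exact isClosed_iInter fun i ↦ isClosed_eq (φ.continuous_charpoly_coeff i) continuous_const

end Continuity

/-- Part (a) of the lemma on mixed orbits (Section 6.3): if `X` lies in the closure of
the orbit of `Y` under Lie algebra automorphisms of a finite-dimensional complex Lie
algebra (with its canonical topology, i.e. any Hausdorff vector topology), then `ad X`
and `ad Y` have the same characteristic polynomial. -/
theorem stmt_10 {L : Type*} [LieRing L] [LieAlgebra ℂ L] [FiniteDimensional ℂ L]
    [TopologicalSpace L] [IsTopologicalAddGroup L] [ContinuousSMul ℂ L] [T2Space L]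
    (X Y : L) (hXY : X ∈ closure {y : L | ∃ φ : L ≃ₗ⁅ℂ⁆ L, φ Y = y}) :
    (LieAlgebra.ad ℂ L X).charpoly = (LieAlgebra.ad ℂ L Y).charpoly := by
  have horbit : {y : L | ∃ φ : L ≃ₗ⁅ℂ⁆ L, φ Y = y} ⊆
      {x | (LieAlgebra.ad ℂ L x).charpoly = (LieAlgebra.ad ℂ L Y).charpoly} := by
    rintro _ ⟨φ, rfl⟩
    exact LieAlgebra.charpoly_ad_lieEquiv φ Y
  have hclosed := LinearMap.isClosed_setOf_charpoly_eq
    (LieAlgebra.ad ℂ L : L →ₗ[ℂ] Module.End ℂ L) (LieAlgebra.ad ℂ L Y).charpoly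
  exact hclosed.closure_subset_iff.mpr horbit hXY
end

section
/- Let V be a finite-dimensional real vector space and let I, J, K be linear endomorphisms of V satisfying I ∘ I = J ∘ J = K ∘ K = −id, I ∘ J = K, J ∘ K = I and K ∘ I = J. Let D be a linear subspace of V whose real codimension in V is 2, i.e. dim V = dim D + 2. Then the set {(a, b, c) ∈ ℝ³ : a² + b² + c² = 1 and (a•I + b•J + c•K)(D) ⊆ D} contains at most two elements. -/
/-!
A quaternionic structure on a real vector space is a module structure over the division
algebra `ℍ`, so its real dimension is divisible by `4`. Two unit imaginary quaternions `x ≠ ±y`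
satisfy `x² = y² = -1` and `xy + yx = 2t` with `t² < 1`; then `x` and the normalised pure part
`(xy - t) / √(1 - t²)` of `xy` are anticommuting square roots of `-1`, i.e. a quaternionic
basis. If the complex structures given by `x` and `y` both preserve `D`, restricting that basis
to `D` makes `D` a quaternionic vector space too, and `4` cannot divide both `dim D` and
`dim D + 2`.
-/

open Quaternion Set

theorem Set.encard_le_two_of_forall_eq_or_eq_neg {α : Type*} [Neg α] {S : Set α}
    (h : ∀ p ∈ S, ∀ q ∈ S, q = p ∨ q = -p) : S.encard ≤ 2 := by
  rcases S.eq_empty_or_nonempty with rfl | ⟨p, hp⟩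
  · simp
  calc S.encard ≤ ({p, -p} : Set α).encard := encard_le_encard fun q hq => h p hp q hq
    _ ≤ 1 + 1 := by grw [encard_insert_le, encard_singleton]
    _ = 2 := by norm_num

section AnticommutingSquareRoots

variable {A : Type*} [Ring A] [Algebra ℝ A]

@[simps]
def QuaternionAlgebra.Basis.ofAnticomm {i j : A} (hi : i * i = -1) (hj : j * j = -1)
    (hji : j * i = -(i * j)) : Basis A (-1 : ℝ) 0 (-1) where
  i := i
  j := j
  k := i * j
  i_mul_i := by simp [hi]
  j_mul_j := by simp [hj]
  i_mul_j := rfl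
  j_mul_i := by simp [hji]

variable {u v : A} {r : ℝ}

theorem mul_sub_smul_one_mul_self (hu : u * u = -1) (hv : v * v = -1)
    (huv : u * v + v * u = (2 * r) • 1) :
    (u * v - r • 1) * (u * v - r • 1) = (r ^ 2 - 1) • 1 := by
  have hvu : v * u = (2 * r) • 1 - u * v := eq_sub_of_add_eq' huv
  have hv_mul : v * (u * v - r • 1) = u + r • v := by
    rw [mul_sub, ← mul_assoc, hvu, sub_mul, mul_assoc u v v, hv]
    simp only [smul_mul_assoc, one_mul, mul_smul_comm, mul_one, mul_neg]
    module
  rw [sub_mul, mul_assoc, hv_mul, mul_add, hu, mul_smul_comm]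
  simp only [smul_mul_assoc, one_mul, mul_sub, mul_smul_comm, mul_one]
  module

theorem mul_sub_smul_one_mul_eq_neg_mul (hu : u * u = -1) (huv : u * v + v * u = (2 * r) • 1) :
    (u * v - r • 1) * u = -(u * (u * v - r • 1)) := by
  have hvu : v * u = (2 * r) • 1 - u * v := eq_sub_of_add_eq' huv
  rw [sub_mul, mul_assoc, hvu, mul_sub, ← mul_assoc u u, hu, mul_sub, ← mul_assoc u u, hu]
  simp only [smul_mul_assoc, one_mul, mul_smul_comm, mul_one, neg_mul]
  module

noncomputable def QuaternionAlgebra.Basis.ofMulAddMul (hu : u * u = -1) (hv : v * v = -1)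
    (huv : u * v + v * u = (2 * r) • 1) (hr : r ^ 2 < 1) : Basis A (-1 : ℝ) 0 (-1) :=
  .ofAnticomm (i := u) (j := (√(1 - r ^ 2))⁻¹ • (u * v - r • 1)) hu
    (by
      have hr' : 0 < 1 - r ^ 2 := sub_pos.mpr hr
      rw [smul_mul_smul, mul_sub_smul_one_mul_self hu hv huv, smul_smul, ← sq, inv_pow,
        Real.sq_sqrt hr'.le, ← neg_sub (1 : ℝ) (r ^ 2), mul_neg, inv_mul_cancel₀ hr'.ne',
        neg_one_smul])
    (by rw [smul_mul_assoc, mul_sub_smul_one_mul_eq_neg_mul hu huv, mul_smul_comm, smul_neg])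

end AnticommutingSquareRoots

theorem four_dvd_finrank_of_algHom {W : Type*} [AddCommGroup W] [Module ℝ W]
    (φ : ℍ[ℝ] →ₐ[ℝ] Module.End ℝ W) : 4 ∣ Module.finrank ℝ W := by
  let _ : Module ℍ[ℝ] W := Module.compHom W φ.toRingHom
  have : IsScalarTower ℝ ℍ[ℝ] W := ⟨fun r q w => by
    show φ (r • q) w = r • φ q w
    simp⟩
  simpa only [Quaternion.finrank_eq_four] using Module.finrank_dvd_finrank_right ℝ ℍ[ℝ] W

theorem four_dvd_finrank_of_mapsTo {V : Type*} [AddCommGroup V] [Module ℝ V]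
    {D : Submodule ℝ V} {u v : Module.End ℝ V} {r : ℝ}
    (hu : u * u = -1) (hv : v * v = -1) (huv : u * v + v * u = (2 * r) • 1) (hr : r ^ 2 < 1)
    (huD : ∀ x ∈ D, u x ∈ D) (hvD : ∀ x ∈ D, v x ∈ D) : 4 ∣ Module.finrank ℝ D := by
  have hu' : u.restrict huD * u.restrict huD = -1 := by
    ext z
    exact LinearMap.congr_fun hu z
  have hv' : v.restrict hvD * v.restrict hvD = -1 := by
    ext z
    exact LinearMap.congr_fun hv z
  have huv' : u.restrict huD * v.restrict hvD + v.restrict hvD * u.restrict huD =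
      (2 * r) • 1 := by
    ext z
    exact LinearMap.congr_fun huv z
  exact four_dvd_finrank_of_algHom
    (QuaternionAlgebra.lift (QuaternionAlgebra.Basis.ofMulAddMul hu' hv' huv' hr))

@[simps]
def pureQuat (p : ℝ × ℝ × ℝ) : ℍ[ℝ] := ⟨0, p.1, p.2.1, p.2.2⟩

theorem pureQuat_injective : Function.Injective pureQuat := fun _ _ h =>
  Prod.ext (congrArg QuaternionAlgebra.imI h)
    (Prod.ext (congrArg QuaternionAlgebra.imJ h) (congrArg QuaternionAlgebra.imK h))

theorem pureQuat_neg (p : ℝ × ℝ × ℝ) : pureQuat (-p) = -pureQuat p := by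
  ext <;> simp

theorem normSq_pureQuat (p : ℝ × ℝ × ℝ) :
    normSq (pureQuat p) = p.1 ^ 2 + p.2.1 ^ 2 + p.2.2 ^ 2 := by
  simp [normSq_def']

namespace Quaternion

variable {x y : ℍ[ℝ]}

theorem mul_add_mul_of_re_eq_zero (hx : x.re = 0) (hy : y.re = 0) :
    x * y + y * x = (2 * (x * y).re) • 1 := by
  ext <;> simp [hx, hy] <;> ring

theorem mul_self_eq_neg_one_of_re_eq_zero (hx : x.re = 0) (hnx : normSq x = 1) :
    x * x = -1 := by
  rw [← sq, sq_eq_neg_normSq.mpr hx, hnx, coe_one]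

theorem normSq_add_re_mul_smul (hx : x.re = 0) (hnx : normSq x = 1) (hny : normSq y = 1) :
    normSq (y + (x * y).re • x) = 1 - (x * y).re ^ 2 := by
  rw [normSq_add, normSq_smul, hnx, hny, star_smul, star_eq_neg.mpr hx]
  simp only [mul_smul_comm, mul_neg, smul_neg, re_neg, re_smul, smul_eq_mul]
  have hre : (y * x).re = (x * y).re := by simp [hx]; ring
  rw [hre]
  ring

theorem re_mul_sq_lt_one (hx : x.re = 0) (hnx : normSq x = 1) (hny : normSq y = 1)
    (hyx : y ≠ x) (hyx' : y ≠ -x) : (x * y).re ^ 2 < 1 := by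
  have key := normSq_add_re_mul_smul hx hnx hny
  refine lt_of_le_of_ne (by linarith [(normSq_nonneg : 0 ≤ normSq (y + (x * y).re • x))]) ?_
  intro h
  rw [h, sub_self, normSq_eq_zero, add_eq_zero_iff_eq_neg, ← neg_smul] at key
  rcases sq_eq_one_iff.mp h with ht | ht
  · exact hyx' (by simpa [ht] using key)
  · exact hyx (by simpa [ht] using key)

end Quaternion

theorem four_dvd_finrank_of_mapsTo_algHom {V : Type*} [AddCommGroup V] [Module ℝ V]
    (φ : ℍ[ℝ] →ₐ[ℝ] Module.End ℝ V) (D : Submodule ℝ V) {x y : ℍ[ℝ]}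
    (hx : x.re = 0) (hy : y.re = 0) (hnx : normSq x = 1) (hny : normSq y = 1)
    (hyx : y ≠ x) (hyx' : y ≠ -x) (hxD : ∀ v ∈ D, φ x v ∈ D) (hyD : ∀ v ∈ D, φ y v ∈ D) :
    4 ∣ Module.finrank ℝ D :=
  four_dvd_finrank_of_mapsTo
    (by rw [← map_mul, mul_self_eq_neg_one_of_re_eq_zero hx hnx, map_neg, map_one])
    (by rw [← map_mul, mul_self_eq_neg_one_of_re_eq_zero hy hny, map_neg, map_one])
    (by rw [← map_mul, ← map_mul, ← map_add, mul_add_mul_of_re_eq_zero hx hy, map_smul,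
      map_one])
    (re_mul_sq_lt_one hx hnx hny hyx hyx') hxD hyD

theorem stmt_12_general {V : Type*} [AddCommGroup V] [Module ℝ V]
    (I J K : V →ₗ[ℝ] V)
    (hI : I ∘ₗ I = -LinearMap.id) (hJ : J ∘ₗ J = -LinearMap.id)
    (hIJ : I ∘ₗ J = K) (hJK : J ∘ₗ K = I)
    (D : Submodule ℝ V) (hD : Module.finrank ℝ V = Module.finrank ℝ D + 2) :
    {p : ℝ × ℝ × ℝ | p.1 ^ 2 + p.2.1 ^ 2 + p.2.2 ^ 2 = 1 ∧
      ∀ x ∈ D, (p.1 • I + p.2.1 • J + p.2.2 • K) x ∈ D}.encard ≤ 2 := by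
  have hIJ' : I * J = K := hIJ
  have hJI : J * I = -(I * J) := by
    rw [hIJ', ← show J * K = I from hJK, ← mul_assoc, show J * J = -1 from hJ, neg_one_mul]
  let φ := QuaternionAlgebra.lift (QuaternionAlgebra.Basis.ofAnticomm hI hJ hJI)
  have hφ (p : ℝ × ℝ × ℝ) : φ (pureQuat p) = p.1 • I + p.2.1 • J + p.2.2 • K := by
    show (QuaternionAlgebra.Basis.ofAnticomm hI hJ hJI).lift (pureQuat p) = _
    simp [QuaternionAlgebra.Basis.lift, hIJ']
  refine encard_le_two_of_forall_eq_or_eq_neg fun p ⟨hp, hpD⟩ q ⟨hq, hqD⟩ => ?_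
  by_contra! hne
  have h4D := four_dvd_finrank_of_mapsTo_algHom φ D (re_pureQuat p) (re_pureQuat q)
    (normSq_pureQuat p ▸ hp) (normSq_pureQuat q ▸ hq) (pureQuat_injective.ne hne.1)
    (pureQuat_neg p ▸ pureQuat_injective.ne hne.2) (hφ p ▸ hpD) (hφ q ▸ hqD)
  have h4V := four_dvd_finrank_of_algHom φ
  omega

/-- The claim of Section 7: if `(I, J, K)` is a quaternionic structure on a
finite-dimensional real vector space `V` and `D` is a subspace of real codimension 2,
then at most two of the complex structures `a•I + b•J + c•K` (with `a² + b² + c² = 1`)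
preserve `D`. -/
theorem stmt_12 {V : Type*} [AddCommGroup V] [Module ℝ V] [FiniteDimensional ℝ V]
    (I J K : V →ₗ[ℝ] V)
    (hI : I ∘ₗ I = -LinearMap.id) (hJ : J ∘ₗ J = -LinearMap.id) (hK : K ∘ₗ K = -LinearMap.id)
    (hIJ : I ∘ₗ J = K) (hJK : J ∘ₗ K = I) (hKI : K ∘ₗ I = J)
    (D : Submodule ℝ V) (hD : Module.finrank ℝ V = Module.finrank ℝ D + 2) :
    {p : ℝ × ℝ × ℝ | p.1 ^ 2 + p.2.1 ^ 2 + p.2.2 ^ 2 = 1 ∧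
      ∀ x ∈ D, (p.1 • I + p.2.1 • J + p.2.2 • K) x ∈ D}.encard ≤ 2 :=
  stmt_12_general I J K hI hJ hIJ hJK D hD
end
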